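/- arXiv:2510.25521 — 3 statements merged into one kernel-verified Lean document; each statement's English description precedes it below -/
import Mathlib

section
/- For every natural number n and every real x with |x| ≤ √(2n), the physicists' Hermite polynomial satisfies |H_n(x)| ≤ n^(n/2) · (4√2)^n · (1 + n/2), where 0^0 is interpreted as 1. -/
open Real

/-- The `n`-th physicists' Hermite polynomial, via its explicit sum formula. -/
noncomputable def physHermite (n : ℕ) (x : ℝ) : ℝ :=
  ∑ m ∈ Finset.range (n / 2 + 1),
    (-1 : ℝ) ^ m * (Nat.factorial n : ℝ) /
      ((Nat.factorial m : ℝ) * (Nat.factorial (n - 2 * m) : ℝ)) * (2 * x) ^ (n - 2 * m)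

lemma my_choose_le_two_pow (n k : ℕ) : n.choose k ≤ 2 ^ n := by
  rcases le_or_gt k n with h | h
  · calc n.choose k ≤ ∑ i ∈ Finset.range (n + 1), n.choose i :=
        Finset.single_le_sum (fun i _ => Nat.zero_le _) (Finset.mem_range.mpr (by omega))
      _ = 2 ^ n := Nat.sum_range_choose n
  · rw [Nat.choose_eq_zero_of_lt h]; exact Nat.zero_le _

lemma coeff_le (n m : ℕ) (h : 2 * m ≤ n) :
    (Nat.factorial n : ℝ) / ((Nat.factorial m : ℝ) * (Nat.factorial (n - 2 * m) : ℝ)) ≤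
      2 ^ n * (n : ℝ) ^ m := by
  have key : n.choose (2 * m) * (2 * m).factorial * (n - 2 * m).factorial = n.factorial :=
    Nat.choose_mul_factorial_mul_factorial h
  have hdesc : (2 * m - m).factorial * (2 * m).descFactorial m = (2 * m).factorial :=
    Nat.factorial_mul_descFactorial (by omega)
  have hmm : 2 * m - m = m := by omega
  rw [hmm] at hdesc
  have hfac : n.factorial = n.choose (2 * m) * (2 * m).descFactorial m *
      (m.factorial * (n - 2 * m).factorial) := by
    rw [← key, ← hdesc]; ring
  have hpos : (0 : ℝ) < (Nat.factorial m : ℝ) * (Nat.factorial (n - 2 * m) : ℝ) := by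
    positivity
  rw [div_le_iff₀ hpos, hfac]
  push_cast
  have h1 : (n.choose (2 * m) : ℝ) ≤ 2 ^ n := by
    exact_mod_cast my_choose_le_two_pow n (2 * m)
  have h2 : ((2 * m).descFactorial m : ℝ) ≤ (n : ℝ) ^ m := by
    calc ((2 * m).descFactorial m : ℝ) ≤ ((2 * m) ^ m : ℕ) := by
          exact_mod_cast Nat.descFactorial_le_pow _ _
      _ ≤ ((n : ℝ)) ^ m := by
          push_cast
          exact pow_le_pow_left₀ (by positivity) (by exact_mod_cast h) m
  have hm := mul_le_mul_of_nonneg_right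
    (mul_le_mul h1 h2 (by positivity) (by positivity)) (le_of_lt hpos)
  ring_nf at hm ⊢
  linarith

theorem hermite_bound_small (n : ℕ) (x : ℝ) (hx : |x| ≤ Real.sqrt (2 * n)) :
    |physHermite n x| ≤ (n : ℝ) ^ ((n : ℝ) / 2) * (4 * Real.sqrt 2) ^ n * (1 + (n : ℝ) / 2) := by
  set B : ℝ := Real.sqrt n ^ n * (4 * Real.sqrt 2) ^ n with hB
  have hBnn : 0 ≤ B := by positivity
  have hsn : (n : ℝ) ^ ((n : ℝ) / 2) = Real.sqrt n ^ n := by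
    rw [show Real.sqrt (n : ℝ) = (n : ℝ) ^ ((1 : ℝ) / 2) from Real.sqrt_eq_rpow _,
      ← Real.rpow_natCast ((n : ℝ) ^ ((1 : ℝ) / 2)) n,
      ← Real.rpow_mul (Nat.cast_nonneg n)]
    ring_nf
  -- per-term bound
  have hterm : ∀ m ∈ Finset.range (n / 2 + 1),
      |(-1 : ℝ) ^ m * (Nat.factorial n : ℝ) /
        ((Nat.factorial m : ℝ) * (Nat.factorial (n - 2 * m) : ℝ)) * (2 * x) ^ (n - 2 * m)| ≤ B := by
    intro m hm
    have hmn : 2 * m ≤ n := by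
      have := Finset.mem_range.mp hm
      omega
    have habs : |(-1 : ℝ) ^ m * (Nat.factorial n : ℝ) /
        ((Nat.factorial m : ℝ) * (Nat.factorial (n - 2 * m) : ℝ)) * (2 * x) ^ (n - 2 * m)| =
        (Nat.factorial n : ℝ) / ((Nat.factorial m : ℝ) * (Nat.factorial (n - 2 * m) : ℝ)) *
          |2 * x| ^ (n - 2 * m) := by
      simp [abs_mul, abs_div, abs_pow, Nat.abs_cast]
    rw [habs]
    have hx2 : |2 * x| ≤ 2 * Real.sqrt 2 * Real.sqrt n := by
      rw [abs_mul, abs_two]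
      calc 2 * |x| ≤ 2 * Real.sqrt (2 * n) := by linarith
        _ = 2 * Real.sqrt 2 * Real.sqrt n := by
          rw [Real.sqrt_mul (by norm_num)]; ring
    have hpow : |2 * x| ^ (n - 2 * m) ≤
        (2 * Real.sqrt 2) ^ (n - 2 * m) * Real.sqrt n ^ (n - 2 * m) := by
      rw [← mul_pow]
      exact pow_le_pow_left₀ (abs_nonneg _) hx2 _
    calc (Nat.factorial n : ℝ) / ((Nat.factorial m : ℝ) * (Nat.factorial (n - 2 * m) : ℝ)) *
          |2 * x| ^ (n - 2 * m)
        ≤ (2 ^ n * (n : ℝ) ^ m) *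
            ((2 * Real.sqrt 2) ^ (n - 2 * m) * Real.sqrt n ^ (n - 2 * m)) := by
          apply mul_le_mul (coeff_le n m hmn) hpow (by positivity) (by positivity)
      _ ≤ (2 ^ n * (n : ℝ) ^ m) *
            ((2 * Real.sqrt 2) ^ n * Real.sqrt n ^ (n - 2 * m)) := by
          apply mul_le_mul_of_nonneg_left _ (by positivity)
          apply mul_le_mul_of_nonneg_right _ (by positivity)
          have h12 : (1 : ℝ) ≤ Real.sqrt 2 := by
            rw [show (1 : ℝ) = Real.sqrt 1 from Real.sqrt_one.symm]
            exact Real.sqrt_le_sqrt (by norm_num)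
          exact pow_le_pow_right₀ (by linarith) (by omega)
      _ = (2 ^ n * (2 * Real.sqrt 2) ^ n) * ((n : ℝ) ^ m * Real.sqrt n ^ (n - 2 * m)) := by
          ring
      _ = B := by
          have hnm : (n : ℝ) ^ m = Real.sqrt n ^ (2 * m) := by
            rw [pow_mul, Real.sq_sqrt (Nat.cast_nonneg n)]
          have key : (n : ℝ) ^ m * Real.sqrt n ^ (n - 2 * m) = Real.sqrt n ^ n := by
            rw [hnm, ← pow_add]
            congr 1
            omega
          rw [key, ← mul_pow, hB]
          ring_nf
  calc |physHermite n x|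
      ≤ ∑ m ∈ Finset.range (n / 2 + 1),
        |(-1 : ℝ) ^ m * (Nat.factorial n : ℝ) /
          ((Nat.factorial m : ℝ) * (Nat.factorial (n - 2 * m) : ℝ)) * (2 * x) ^ (n - 2 * m)| :=
        by rw [physHermite]; exact Finset.abs_sum_le_sum_abs _ _
    _ ≤ ∑ _m ∈ Finset.range (n / 2 + 1), B := Finset.sum_le_sum hterm
    _ = ((n / 2 + 1 : ℕ) : ℝ) * B := by rw [Finset.sum_const, nsmul_eq_mul]; norm_num
    _ ≤ (1 + (n : ℝ) / 2) * B := by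
        apply mul_le_mul_of_nonneg_right _ hBnn
        push_cast
        have : ((n / 2 : ℕ) : ℝ) ≤ (n : ℝ) / 2 := by
          rw [le_div_iff₀ (by norm_num)]
          exact_mod_cast Nat.div_mul_le_self n 2
        linarith
    _ = (n : ℝ) ^ ((n : ℝ) / 2) * (4 * Real.sqrt 2) ^ n * (1 + (n : ℝ) / 2) := by
        rw [hsn, hB]; ring
end

section
/- Let V : ℝ → ℝ be C¹ with V' globally Lipschitz with constant L_V, and suppose there exist β > 0 and R ≥ 1 such that -sign(x) V'(x) ≤ -β|x| for all |x| ≥ R. Define f(x) = ∫_0^x exp(V(z)/σ²) dz for a fixed σ > 0. Then there exist constants C₁, C₂ > 0 such that for all sufficiently large x > 0, (C₁/x) exp(β x²/(2σ²)) ≤ f(x) ≤ (C₂/x) exp((L_V + |V'(0)|) x²/(2σ²)). -/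
open Real MeasureTheory intervalIntegral

set_option maxHeartbeats 1000000

theorem scale_function_asymptotics (V : ℝ → ℝ) (σ L_V β R : ℝ) (hσ : 0 < σ)
    (hV : ContDiff ℝ 1 V)
    (hLip : ∀ x y : ℝ, |deriv V x - deriv V y| ≤ L_V * |x - y|)
    (hβ : 0 < β) (hR : 1 ≤ R)
    (hdiss : ∀ x : ℝ, R ≤ |x| → -(Real.sign x) * deriv V x ≤ -β * |x|) :
    ∃ C₁ C₂ : ℝ, 0 < C₁ ∧ 0 < C₂ ∧ ∃ x₀ : ℝ, 0 < x₀ ∧ ∀ x : ℝ, x₀ ≤ x →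
      C₁ / x * Real.exp (β * x ^ 2 / (2 * σ ^ 2))
          ≤ (∫ z in (0 : ℝ)..x, Real.exp (V z / σ ^ 2))
        ∧ (∫ z in (0 : ℝ)..x, Real.exp (V z / σ ^ 2))
          ≤ C₂ / x * Real.exp ((L_V + |deriv V 0|) * x ^ 2 / (2 * σ ^ 2)) := by
  have hVd : Differentiable ℝ V := hV.differentiable one_ne_zero
  have hσ2 : (0:ℝ) < σ ^ 2 := by positivity
  set a := |deriv V 0| with ha
  have ha0 : 0 ≤ a := abs_nonneg _
  have hL0 : 0 ≤ L_V := by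
    have h := hLip 1 0
    simp only [sub_zero, abs_one, mul_one] at h
    exact le_trans (abs_nonneg _) h
  have hV'le : ∀ z : ℝ, 0 ≤ z → deriv V z ≤ L_V * z + a := by
    intro z hz
    have h := hLip z 0
    rw [sub_zero, abs_of_nonneg hz] at h
    calc deriv V z ≤ |deriv V z| := le_abs_self _
      _ ≤ |deriv V z - deriv V 0| + |deriv V 0| := by
          simpa using abs_add_le (deriv V z - deriv V 0) (deriv V 0)
      _ ≤ L_V * z + a := by rw [← ha]; linarith
  have hV'ge : ∀ z : ℝ, R ≤ z → β * z ≤ deriv V z := by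
    intro z hz
    have hz0 : 0 < z := lt_of_lt_of_le (by linarith) hz
    have h := hdiss z (by rwa [abs_of_pos hz0])
    rw [Real.sign_of_pos hz0, abs_of_pos hz0] at h
    linarith
  have hLa : β ≤ L_V + a := by
    have h1 := hV'ge R le_rfl
    have h2 := hV'le R (by linarith)
    have hR0 : (0:ℝ) < R := by linarith
    nlinarith [mul_le_mul_of_nonneg_left ha0 hR0.le]
  have hLpos : 0 < L_V + a := lt_of_lt_of_le hβ hLa
  -- upper bound on V for z ≥ 0
  have hVub : ∀ z : ℝ, 0 ≤ z → V z ≤ V 0 + (L_V / 2 * z ^ 2 + a * z) := by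
    intro z hz
    set g : ℝ → ℝ := fun t => V 0 + (L_V / 2 * t ^ 2 + a * t) - V t with hg
    have hderiv : ∀ t : ℝ, HasDerivAt g (L_V * t + a - deriv V t) t := by
      intro t
      have hp : HasDerivAt (fun t : ℝ => t ^ 2) (2 * t) t := by
        simpa using hasDerivAt_pow 2 t
      have h1 := ((hp.const_mul (L_V / 2)).add ((hasDerivAt_id t).const_mul a)).const_add (V 0)
      have h2 : HasDerivAt (fun t : ℝ => V 0 + (L_V / 2 * t ^ 2 + a * t)) (L_V * t + a) t := by
        rw [show L_V * t + a = L_V / 2 * (2 * t) + a * 1 by ring]; exact h1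
      exact h2.sub (hVd t).hasDerivAt
    have hgdiff : Differentiable ℝ g := fun t => (hderiv t).differentiableAt
    have hmono : MonotoneOn g (Set.Ici (0:ℝ)) := by
      apply monotoneOn_of_deriv_nonneg (convex_Ici 0) hgdiff.continuous.continuousOn
        hgdiff.differentiableOn
      intro t ht
      rw [interior_Ici] at ht
      rw [(hderiv t).deriv]
      have := hV'le t (le_of_lt ht)
      linarith
    have h0 := hmono Set.self_mem_Ici hz hz
    have hg0 : g 0 = 0 := by simp [hg]
    have hgz : g z = V 0 + (L_V / 2 * z ^ 2 + a * z) - V z := rfl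
    rw [hg0, hgz] at h0
    linarith
  -- lower bound on V for z ≥ R
  have hVlb : ∀ z : ℝ, R ≤ z → V R + β / 2 * (z ^ 2 - R ^ 2) ≤ V z := by
    intro z hz
    set g : ℝ → ℝ := fun t => V t - β / 2 * t ^ 2 with hg
    have hderiv : ∀ t : ℝ, HasDerivAt g (deriv V t - β * t) t := by
      intro t
      have hp : HasDerivAt (fun t : ℝ => t ^ 2) (2 * t) t := by
        simpa using hasDerivAt_pow 2 t
      have h1 := (hVd t).hasDerivAt.sub (hp.const_mul (β / 2))
      rw [show deriv V t - β * t = deriv V t - β / 2 * (2 * t) by ring]; exact h1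
    have hgdiff : Differentiable ℝ g := fun t => (hderiv t).differentiableAt
    have hmono : MonotoneOn g (Set.Ici R) := by
      apply monotoneOn_of_deriv_nonneg (convex_Ici R) hgdiff.continuous.continuousOn
        hgdiff.differentiableOn
      intro t ht
      rw [interior_Ici] at ht
      rw [(hderiv t).deriv]
      have := hV'ge t (le_of_lt ht)
      linarith
    have h0 := hmono Set.self_mem_Ici hz hz
    have hgR : g R = V R - β / 2 * R ^ 2 := rfl
    have hgz : g z = V z - β / 2 * z ^ 2 := rfl
    rw [hgR, hgz] at h0
    linarith
  have hcont : Continuous (fun z : ℝ => Real.exp (V z / σ ^ 2)) :=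
    Real.continuous_exp.comp (hVd.continuous.div_const _)
  refine ⟨Real.exp ((V R - β / 2 * R ^ 2 - β) / σ ^ 2),
    Real.exp (V 0 / σ ^ 2) * (2 * σ ^ 2) / (L_V + a),
    Real.exp_pos _, by positivity, R + 1, by linarith, ?_⟩
  intro x hx
  have hx2 : (2:ℝ) ≤ x := by linarith
  have hx0 : (0:ℝ) < x := by linarith
  have hinvx : 1 / x ≤ 1 := by rw [div_le_one hx0]; linarith
  have hinvx0 : 0 < 1 / x := by positivity
  have hxR : R ≤ x - 1 / x := by linarith
  have hx10 : 0 ≤ x - 1 / x := by linarith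
  constructor
  · -- lower bound
    have hsplit : (∫ z in (0:ℝ)..x, Real.exp (V z / σ ^ 2)) =
        (∫ z in (0:ℝ)..(x - 1/x), Real.exp (V z / σ ^ 2)) +
        (∫ z in (x - 1/x)..x, Real.exp (V z / σ ^ 2)) :=
      (integral_add_adjacent_intervals (hcont.intervalIntegrable _ _)
        (hcont.intervalIntegrable _ _)).symm
    have hnn : 0 ≤ ∫ z in (0:ℝ)..(x - 1/x), Real.exp (V z / σ ^ 2) :=
      intervalIntegral.integral_nonneg hx10 (fun u _ => (Real.exp_pos _).le)
    have hpt : ∀ z ∈ Set.Icc (x - 1/x) x,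
        Real.exp ((V R - β / 2 * R ^ 2 - β) / σ ^ 2) * Real.exp (β * x ^ 2 / (2 * σ ^ 2))
          ≤ Real.exp (V z / σ ^ 2) := by
      intro z hz
      rw [← Real.exp_add, Real.exp_le_exp]
      have hzR : R ≤ z := le_trans hxR hz.1
      have h1 := hVlb z hzR
      have hz2 : x ^ 2 - 2 ≤ z ^ 2 := by
        have h3 : x - 1/x ≤ z := hz.1
        have h4 : (x - 1/x) ^ 2 ≤ z ^ 2 := by nlinarith
        have h5 : x ^ 2 - 2 ≤ (x - 1/x) ^ 2 := by
          have : (x - 1/x) ^ 2 = x ^ 2 - 2 + (1/x) ^ 2 := by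
            field_simp; ring
          nlinarith [sq_nonneg (1/x)]
        linarith
      have hA : V R - β / 2 * R ^ 2 - β + β * x ^ 2 / 2 ≤ V z := by
        nlinarith [mul_le_mul_of_nonneg_left hz2 (by positivity : (0:ℝ) ≤ β / 2)]
      have heq : (V R - β / 2 * R ^ 2 - β) / σ ^ 2 + β * x ^ 2 / (2 * σ ^ 2)
          = (V R - β / 2 * R ^ 2 - β + β * x ^ 2 / 2) / σ ^ 2 := by
        field_simp
      rw [heq]
      exact div_le_div_of_nonneg_right hA hσ2.le
    have hci : IntervalIntegrable (fun _ : ℝ =>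
        Real.exp ((V R - β / 2 * R ^ 2 - β) / σ ^ 2) * Real.exp (β * x ^ 2 / (2 * σ ^ 2)))
        volume (x - 1/x) x := intervalIntegrable_const
    have hmono := intervalIntegral.integral_mono_on (by linarith : x - 1/x ≤ x)
      hci (hcont.intervalIntegrable _ _) hpt
    rw [intervalIntegral.integral_const, smul_eq_mul] at hmono
    have hxx : x - (x - 1/x) = 1/x := by ring
    rw [hxx] at hmono
    calc Real.exp ((V R - β / 2 * R ^ 2 - β) / σ ^ 2) / x *
          Real.exp (β * x ^ 2 / (2 * σ ^ 2))
        = 1/x * (Real.exp ((V R - β / 2 * R ^ 2 - β) / σ ^ 2) *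
            Real.exp (β * x ^ 2 / (2 * σ ^ 2))) := by ring
      _ ≤ ∫ z in (x - 1/x)..x, Real.exp (V z / σ ^ 2) := hmono
      _ ≤ ∫ z in (0:ℝ)..x, Real.exp (V z / σ ^ 2) := by rw [hsplit]; linarith
  · -- upper bound
    set c : ℝ := (L_V + a) * x / (2 * σ ^ 2) with hc
    have hc0 : 0 < c := by positivity
    have hpt : ∀ z ∈ Set.Icc (0:ℝ) x,
        Real.exp (V z / σ ^ 2) ≤ Real.exp (V 0 / σ ^ 2) * Real.exp (c * z) := by
      intro z hz
      rw [← Real.exp_add, Real.exp_le_exp]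
      have h1 := hVub z hz.1
      have hzx : z ≤ x := hz.2
      have hz0 : 0 ≤ z := hz.1
      have h2 : L_V / 2 * z ^ 2 + a * z ≤ σ ^ 2 * (c * z) := by
        have heq : σ ^ 2 * (c * z) = (L_V + a) * x * z / 2 := by
          rw [hc]; field_simp
        rw [heq]
        nlinarith [mul_le_mul_of_nonneg_left (mul_le_mul_of_nonneg_right hzx hz0)
            (by positivity : (0:ℝ) ≤ L_V / 2),
          mul_le_mul_of_nonneg_left hx2 (mul_nonneg ha0 hz0)]
      have key : V z ≤ V 0 + σ ^ 2 * (c * z) := by linarith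
      calc V z / σ ^ 2 ≤ (V 0 + σ ^ 2 * (c * z)) / σ ^ 2 :=
            div_le_div_of_nonneg_right key hσ2.le
        _ = V 0 / σ ^ 2 + c * z := by field_simp
    have hIexp : (∫ z in (0:ℝ)..x, Real.exp (c * z)) = c⁻¹ * (Real.exp (c * x) - 1) := by
      rw [intervalIntegral.integral_comp_mul_left (fun y => Real.exp y) (ne_of_gt hc0)]
      simp [integral_exp]
    have hci2 : IntervalIntegrable (fun z : ℝ =>
        Real.exp (V 0 / σ ^ 2) * Real.exp (c * z)) volume 0 x :=
      (continuous_const.mul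
        (Real.continuous_exp.comp (continuous_const.mul continuous_id))).intervalIntegrable _ _
    have hmono := intervalIntegral.integral_mono_on hx0.le
      (hcont.intervalIntegrable _ _) hci2 hpt
    have hIconst : (∫ z in (0:ℝ)..x, Real.exp (V 0 / σ ^ 2) * Real.exp (c * z))
        = Real.exp (V 0 / σ ^ 2) * (c⁻¹ * (Real.exp (c * x) - 1)) := by
      rw [intervalIntegral.integral_const_mul, hIexp]
    rw [hIconst] at hmono
    have hcx : c * x = (L_V + a) * x ^ 2 / (2 * σ ^ 2) := by rw [hc]; ring
    calc (∫ z in (0:ℝ)..x, Real.exp (V z / σ ^ 2))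
        ≤ Real.exp (V 0 / σ ^ 2) * (c⁻¹ * (Real.exp (c * x) - 1)) := hmono
      _ ≤ Real.exp (V 0 / σ ^ 2) * (c⁻¹ * Real.exp (c * x)) := by
          have : c⁻¹ * (Real.exp (c * x) - 1) ≤ c⁻¹ * Real.exp (c * x) := by
            apply mul_le_mul_of_nonneg_left _ (inv_nonneg.mpr hc0.le)
            linarith
          exact mul_le_mul_of_nonneg_left this (Real.exp_pos _).le
      _ = Real.exp (V 0 / σ ^ 2) * (2 * σ ^ 2) / (L_V + a) / x *
            Real.exp ((L_V + a) * x ^ 2 / (2 * σ ^ 2)) := by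
          rw [hcx, hc]
          field_simp
end

section
/- For every u > 0, the Lambert W function branch W_{-1} satisfies -1 - √(2u) - u < W_{-1}(-e^{-u-1}) < -1 - √(2u) - (2/3)u. -/
open Real

-- auxiliary inequality A: 1 + s + s^2/2 < exp s for s > 0
lemma ineqA {s : ℝ} (hs : 0 < s) : 1 + s + s^2/2 < Real.exp s := by
  have key : StrictMonoOn (fun x : ℝ => Real.exp x - (1 + x + x^2/2)) (Set.Ici 0) := by
    apply strictMonoOn_of_deriv_pos (convex_Ici 0)
    · fun_prop
    · intro x hx
      rw [interior_Ici] at hx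
      have hd : HasDerivAt (fun x : ℝ => Real.exp x - (1 + x + x^2/2))
          (Real.exp x - (1 + x)) x := by
        have h1 : HasDerivAt (fun x : ℝ => 1 + x + x^2/2) (0 + 1 + 2*x/2) x := by
          exact (((hasDerivAt_const x (1:ℝ)).add (hasDerivAt_id x)).add
            (((hasDerivAt_pow 2 x)).div_const 2)).congr_deriv (by ring)
        have := (Real.hasDerivAt_exp x).sub h1
        exact this.congr_deriv (by ring)
      rw [hd.deriv]
      have := Real.add_one_lt_exp (ne_of_gt hx)
      linarith
  have h0 := key (Set.self_mem_Ici) (Set.mem_Ici.mpr hs.le) hs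
  simp at h0
  linarith

-- auxiliary inequality B: exp (s - s^2/6) < 1 + s + s^2/3 for s > 0
lemma ineqB {s : ℝ} (hs : 0 < s) : Real.exp (s - s^2/6) < 1 + s + s^2/3 := by
  have key : StrictMonoOn (fun x : ℝ => (1 + x + x^2/3) * Real.exp (x^2/6 - x)) (Set.Ici 0) := by
    apply strictMonoOn_of_deriv_pos (convex_Ici 0)
    · fun_prop
    · intro x hx
      rw [interior_Ici] at hx
      have h1 : HasDerivAt (fun x : ℝ => 1 + x + x^2/3) (0 + 1 + 2*x/3) x :=
        ((hasDerivAt_const x (1:ℝ)).add (hasDerivAt_id x)).add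
          ((hasDerivAt_pow 2 x).div_const 3) |>.congr_deriv (by ring)
      have h2 : HasDerivAt (fun x : ℝ => x^2/6 - x) (2*x/6 - 1) x :=
        ((hasDerivAt_pow 2 x).div_const 6).sub (hasDerivAt_id x) |>.congr_deriv (by ring)
      have hd : HasDerivAt (fun x : ℝ => (1 + x + x^2/3) * Real.exp (x^2/6 - x))
          (Real.exp (x^2/6 - x) * (x^3/9)) x := by
        have := h1.mul h2.exp
        exact this.congr_deriv (by ring)
      rw [hd.deriv]
      exact mul_pos (Real.exp_pos _) (div_pos (pow_pos hx 3) (by norm_num))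
  have h0 := key (Set.self_mem_Ici) (Set.mem_Ici.mpr hs.le) hs
  simp at h0
  -- h0 : 1 < (1 + s + s^2/3) * exp (s^2/6 - s)
  have e : Real.exp (s - s^2/6) * Real.exp (s^2/6 - s) = 1 := by
    rw [← Real.exp_add, show (s - s^2/6) + (s^2/6 - s) = 0 by ring, Real.exp_zero]
  have h3 := mul_lt_mul_of_pos_left h0 (Real.exp_pos (s - s^2/6))
  nlinarith [h3, e]

/-- The lower real branch `W₋₁` of the Lambert W function: the inverse of `w ↦ w * exp w`
restricted to `(-∞, -1]`. -/
noncomputable def lambertWm1 (y : ℝ) : ℝ :=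
  sSup {w : ℝ | w ≤ -1 ∧ w * Real.exp w = y}

theorem lambertWm1_bounds (u : ℝ) (hu : 0 < u) :
    -1 - Real.sqrt (2 * u) - u < lambertWm1 (-Real.exp (-u - 1)) ∧
      lambertWm1 (-Real.exp (-u - 1)) < -1 - Real.sqrt (2 * u) - 2 / 3 * u := by
  set s := Real.sqrt (2 * u) with hsdef
  have hs : 0 < s := Real.sqrt_pos.mpr (by linarith)
  have hs2 : s^2 = 2 * u := Real.sq_sqrt (by linarith)
  set y := -Real.exp (-u - 1) with hy
  set L := -1 - s - u with hL
  set U := -1 - s - 2/3*u with hU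
  have hLU : L < U := by rw [hL, hU]; linarith
  have hU1 : U < -1 := by rw [hU]; nlinarith
  set f := fun w : ℝ => w * Real.exp w with hf
  -- f L > y
  have hfL : y < f L := by
    have hA := ineqA hs
    have h1 : (1 + s + u) * Real.exp (-(1 + s + u)) < Real.exp (-u - 1) := by
      have e1 : Real.exp (-(1 + s + u)) = Real.exp (-u-1) * Real.exp (-s) := by
        rw [← Real.exp_add]; ring_nf
      rw [e1]
      have h2 : 1 + s + u < Real.exp s := by nlinarith
      calc (1 + s + u) * (Real.exp (-u-1) * Real.exp (-s))
          < Real.exp s * (Real.exp (-u-1) * Real.exp (-s)) := by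
            apply mul_lt_mul_of_pos_right h2; positivity
        _ = Real.exp (-u-1) := by rw [← Real.exp_add, ← Real.exp_add]; ring_nf
    have hfl : f L = -((1 + s + u) * Real.exp (-(1 + s + u))) := by
      rw [hf]; simp only [hL]; ring_nf
    rw [hfl, hy]; linarith
  -- f U < y
  have hfU : f U < y := by
    have hB := ineqB hs
    have h1 : Real.exp (-u - 1) < (1 + s + 2/3*u) * Real.exp (-(1 + s + 2/3*u)) := by
      have e1 : s - s^2/6 = (-u - 1) + (1 + s + 2/3*u) := by nlinarith
      have h2 : Real.exp ((-u-1) + (1 + s + 2/3*u)) < 1 + s + 2/3*u := by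
        rw [← e1]
        have h23 : s^2/3 = 2/3*u := by linarith
        rw [← h23]; exact hB
      have h3 := mul_lt_mul_of_pos_right h2 (Real.exp_pos (-(1 + s + 2/3*u)))
      rw [← Real.exp_add,
        show (-u - 1) + (1 + s + 2/3*u) + -(1 + s + 2/3*u) = -u - 1 from by ring] at h3
      exact h3
    have hfu : f U = -((1 + s + 2/3*u) * Real.exp (-(1 + s + 2/3*u))) := by
      rw [hf]; simp only [hU]; ring_nf
    rw [hfu, hy]; linarith
  -- f strictly antitone on Iic (-1)
  have hanti : StrictAntiOn f (Set.Iic (-1 : ℝ)) := by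
    apply strictAntiOn_of_deriv_neg (convex_Iic (-1)) (by fun_prop)
    intro x hx
    rw [interior_Iic] at hx
    have hd : HasDerivAt f ((1 + x) * Real.exp x) x := by
      have := (hasDerivAt_id x).mul (Real.hasDerivAt_exp x)
      exact this.congr_deriv (by simp only [id_eq]; ring)
    rw [hd.deriv]
    have hx1 : (1 : ℝ) + x < 0 := by
      have := Set.mem_Iio.mp hx; linarith
    have := Real.exp_pos x
    nlinarith
  -- existence of root via IVT
  have hcont : ContinuousOn f (Set.Icc L U) := by fun_prop
  have hmem : y ∈ Set.Icc (f U) (f L) := ⟨hfU.le, hfL.le⟩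
  obtain ⟨w₀, hw₀mem, hw₀⟩ := intermediate_value_Icc' hLU.le hcont hmem
  have hw₀L : L < w₀ := by
    rcases lt_or_eq_of_le hw₀mem.1 with h | h
    · exact h
    · exfalso; rw [← h] at hw₀; rw [hw₀] at hfL; exact lt_irrefl _ hfL
  have hw₀U : w₀ < U := by
    rcases lt_or_eq_of_le hw₀mem.2 with h | h
    · exact h
    · exfalso; rw [h] at hw₀; rw [hw₀] at hfU; exact lt_irrefl _ hfU
  have hw₀1 : w₀ ≤ -1 := le_of_lt (lt_trans hw₀U hU1)
  -- the set is the singleton {w₀}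
  have hset : {w : ℝ | w ≤ -1 ∧ w * Real.exp w = y} = {w₀} := by
    ext w
    simp only [Set.mem_setOf_eq, Set.mem_singleton_iff]
    constructor
    · rintro ⟨hw1, hw2⟩
      exact hanti.injOn (Set.mem_Iic.mpr hw1) (Set.mem_Iic.mpr hw₀1)
        ((hw2.trans hw₀.symm : f w = f w₀))
    · rintro rfl
      exact ⟨hw₀1, hw₀⟩
  have hval : lambertWm1 y = w₀ := by
    rw [lambertWm1, hset, csSup_singleton]
  rw [hval]
  exact ⟨hw₀L, hw₀U⟩
end
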